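/- arXiv:2112.14873 — 4 statements merged into one kernel-verified Lean document; each statement's English description precedes it below -/
import Mathlib

section
/- Let C be an abelian category and T a class of objects of C. For every class Z of objects of C all of whose members are T-compact for monomorphisms, one has Add(T) ∩ Z = add(T) ∩ Z. That is, if X ∈ Z is a direct summand of a (possibly infinite) coproduct of objects of T, then X is a direct summand of a finite coproduct of objects of T. -/
open CategoryTheory Limits

universe w v u

variable {C : Type u} [Category.{v} C] [Abelian C]

/-- `X ∈ Add(T)`: `X` is a direct summand of a (possibly infinite) coproduct of objects of `T`,
whenever such a coproduct exists (expressed via a colimit cofan). -/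
def MemAdd (T : Set C) (X : C) : Prop :=
  ∃ (I : Type w) (U : I → C), (∀ i, U i ∈ T) ∧
    ∃ (c : Cofan U), Nonempty (IsColimit c) ∧
      ∃ (s : X ⟶ c.pt) (r : c.pt ⟶ X), s ≫ r = 𝟙 X

/-- `X ∈ add(T)`: `X` is a direct summand of a finite coproduct of objects of `T`. -/
def Memadd (T : Set C) (X : C) : Prop :=
  ∃ (n : ℕ) (U : Fin n → C), (∀ i, U i ∈ T) ∧
    ∃ (s : X ⟶ ∐ U) (r : (∐ U) ⟶ X), s ≫ r = 𝟙 X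

/-- `M` is `T`-compact for monomorphisms: every monomorphism from `M` into a coproduct of
objects of `T` (whenever it exists) factors through the inclusion of a finite
subcoproduct. -/
def IsTCompactMono (T : Set C) (M : C) : Prop :=
  ∀ ⦃I : Type w⦄ (U : I → C), (∀ i, U i ∈ T) →
    ∀ (c : Cofan U), IsColimit c → ∀ f : M ⟶ c.pt, Mono f →
      ∃ (F : Finset I) (g : M ⟶ ∐ (fun i : F => U i)),
        f = g ≫ Sigma.desc (fun i : F => c.inj i.1)

lemma memadd_of_retract_sigma {T : Set C} {X : C} {J : Type*} [Finite J] {U : J → C}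
    (hU : ∀ j, U j ∈ T) (h : Retract X (∐ U)) : Memadd T X := by
  have := Fintype.ofFinite J
  let e := Fintype.equivFin J
  let h' := h.trans (Retract.ofIso (Sigma.reindex e.symm U).symm)
  exact ⟨Fintype.card J, U ∘ e.symm, fun k => hU _, h'.i, h'.r, h'.retract⟩

lemma Memadd.memAdd {T : Set C} {X : C} (hX : Memadd T X) : MemAdd.{w} T X := by
  obtain ⟨n, U, hU, s, r, hsr⟩ := hX
  let h := (Retract.mk s r hsr).trans
    (Retract.ofIso (Sigma.reindex (Equiv.ulift.{w} : ULift (Fin n) ≃ Fin n) U).symm)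
  exact ⟨ULift (Fin n), U ∘ Equiv.ulift, fun i => hU _, Cofan.mk _ (Sigma.ι _),
    ⟨coproductIsCoproduct _⟩, h.i, h.r, h.retract⟩

/-- The section `s : X ⟶ c.pt` of a retraction is a monomorphism, so it factors as `g ≫ ι_F`
through a finite subcoproduct; then `g` is a section of `ι_F ≫ r`. -/
lemma IsTCompactMono.memadd_of_memAdd {T : Set C} {X : C} (hX : IsTCompactMono.{w} T X)
    (hAdd : MemAdd.{w} T X) : Memadd T X := by
  obtain ⟨I, U, hU, c, ⟨hc⟩, s, r, hsr⟩ := hAdd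
  have : IsSplitMono s := IsSplitMono.mk' ⟨r, hsr⟩
  obtain ⟨F, g, hg⟩ := hX U hU c hc s inferInstance
  refine memadd_of_retract_sigma (fun i : F => hU i)
    ⟨g, Sigma.desc (fun i : F => c.inj i) ≫ r, ?_⟩
  rw [← Category.assoc, ← hg, hsr]

/-- If every member of `Z` is `T`-compact for monomorphisms, then
`Add(T) ∩ Z = add(T) ∩ Z`. -/
theorem stmt5 (T Z : Set C) (hZ : ∀ X ∈ Z, IsTCompactMono.{w} T X) :
    ∀ X ∈ Z, (MemAdd.{w} T X ↔ Memadd T X) :=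
  fun X hX => ⟨(hZ X hX).memadd_of_memAdd, Memadd.memAdd⟩
end

section
/- Let C be an abelian category, X a class of objects of C closed under direct summands, and T a class of objects of C closed under direct summands such that Ext^i_C(T, T') = 0 for all T, T' ∈ T ∩ X and all i ≥ 1. Suppose A ∈ T^⊥ admits a short exact sequence 0 → A → T_0 → A' → 0 with T_0 ∈ T ∩ X and Ext^1_C(A', A) = 0. Then A ∈ T ∩ X. -/
open CategoryTheory Limits

universe w v u

lemma CategoryTheory.ShortComplex.ShortExact.isSplitMono_f_of_subsingleton_ext
    {C : Type u} [Category.{v} C] [Abelian C] [HasExt.{w} C] {S : ShortComplex C}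
    (hS : S.ShortExact) [Subsingleton (Abelian.Ext S.X₃ S.X₁ 1)] : IsSplitMono S.f := by
  -- `𝟙 S.X₁` extends along `S.f` because its image under the connecting map lies in `Ext¹ = 0`.
  obtain ⟨x, hx⟩ := Abelian.Ext.contravariant_sequence_exact₁ hS S.X₁ (Abelian.Ext.mk₀ (𝟙 S.X₁))
    (zero_add 1) (Subsingleton.elim _ _)
  obtain ⟨r, rfl⟩ := (Abelian.Ext.mk₀_bijective S.X₂ S.X₁).surjective x
  rw [Abelian.Ext.mk₀_comp_mk₀] at hx
  exact ⟨⟨r, (Abelian.Ext.mk₀_bijective S.X₁ S.X₁).injective hx⟩⟩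

theorem stmt9_general {C : Type u} [Category.{v} C] [Abelian C] [HasExt.{w} C]
    (𝒳 𝒯 : Set C)
    (hXsmd : ∀ ⦃X Y : C⦄ (s : X ⟶ Y) (r : Y ⟶ X), s ≫ r = 𝟙 X → Y ∈ 𝒳 → X ∈ 𝒳)
    (hTsmd : ∀ ⦃X Y : C⦄ (s : X ⟶ Y) (r : Y ⟶ X), s ≫ r = 𝟙 X → Y ∈ 𝒯 → X ∈ 𝒯)
    {A T₀ A' : C}
    (f : A ⟶ T₀) (g : T₀ ⟶ A') (w : f ≫ g = 0)
    (hse : (ShortComplex.mk f g w).ShortExact)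
    (hT₀ : T₀ ∈ 𝒯 ∩ 𝒳)
    (hA' : Subsingleton (Abelian.Ext A' A 1)) :
    A ∈ 𝒯 ∩ 𝒳 := by
  have : IsSplitMono f := hse.isSplitMono_f_of_subsingleton_ext
  exact ⟨hTsmd f (retraction f) (IsSplitMono.id f) hT₀.1,
    hXsmd f (retraction f) (IsSplitMono.id f) hT₀.2⟩

/-- Let `C` be abelian, `𝒳` and `𝒯` classes closed under direct summands
with `Ext^i(T, T') = 0` for all `T, T' ∈ 𝒯 ∩ 𝒳` and `i ≥ 1`. If `A ∈ 𝒯^⊥` admits a short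
exact sequence `0 → A → T₀ → A' → 0` with `T₀ ∈ 𝒯 ∩ 𝒳` and `Ext¹(A', A) = 0`, then
`A ∈ 𝒯 ∩ 𝒳`. -/
theorem stmt9 {C : Type u} [Category.{v} C] [Abelian C] [HasExt.{w} C]
    (𝒳 𝒯 : Set C)
    (hXsmd : ∀ ⦃X Y : C⦄ (s : X ⟶ Y) (r : Y ⟶ X), s ≫ r = 𝟙 X → Y ∈ 𝒳 → X ∈ 𝒳)
    (hTsmd : ∀ ⦃X Y : C⦄ (s : X ⟶ Y) (r : Y ⟶ X), s ≫ r = 𝟙 X → Y ∈ 𝒯 → X ∈ 𝒯)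
    (hTT : ∀ T ∈ 𝒯 ∩ 𝒳, ∀ T' ∈ 𝒯 ∩ 𝒳, ∀ i : ℕ, 1 ≤ i →
      Subsingleton (Abelian.Ext T T' i))
    {A T₀ A' : C}
    (hA : ∀ T ∈ 𝒯, ∀ i : ℕ, 1 ≤ i → Subsingleton (Abelian.Ext T A i))
    (f : A ⟶ T₀) (g : T₀ ⟶ A') (w : f ≫ g = 0)
    (hse : (ShortComplex.mk f g w).ShortExact)
    (hT₀ : T₀ ∈ 𝒯 ∩ 𝒳)
    (hA' : Subsingleton (Abelian.Ext A' A 1)) :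
    A ∈ 𝒯 ∩ 𝒳 :=
  stmt9_general 𝒳 𝒯 hXsmd hTsmd f g w hse hT₀ hA'
end

section
/- Let C be an abelian category, T a class of objects of C with T ⊆ T^⊥ (i.e., Ext^i(T,T')=0 for all T,T' ∈ T, i ≥ 1), and suppose there is an exact sequence 0 → W → M_0 → M_1 → ⋯ → M_n → 0 with all M_j ∈ T. Then the map f_0 : W → M_0 is a special T^⊥-preenvelope of W: it is a monomorphism with M_0 ∈ T^⊥ and Coker(f_0) ∈ ⊥(T^⊥), and every morphism from W to an object of T^⊥ factors through f_0. -/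
open CategoryTheory Limits

universe w v u

variable {C : Type u} [Category.{v} C] [Abelian C]

/-- `CoresOfLength T n M` means there is an exact sequence
`0 → M → T₀ → T₁ → ⋯ → Tₙ → 0` with all `Tⱼ ∈ T`. -/
def CoresOfLength (T : Set C) : ℕ → C → Prop
  | 0, M => ∃ T₀ ∈ T, Nonempty (M ≅ T₀)
  | n + 1, M => ∃ (T₀ M' : C) (f : M ⟶ T₀) (g : T₀ ⟶ M') (w : f ≫ g = 0),
      T₀ ∈ T ∧ (ShortComplex.mk f g w).ShortExact ∧ CoresOfLength T n M'

variable [HasExt.{w} C]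

/-- The right orthogonal class `𝒯^⊥ = {B | Ext^i(T, B) = 0 for all T ∈ 𝒯, i ≥ 1}`. -/
def rightPerp (𝒯 : Set C) : Set C :=
  {B | ∀ T ∈ 𝒯, ∀ i : ℕ, 1 ≤ i → Subsingleton (Abelian.Ext T B i)}

/-- The left orthogonal class `⊥𝒮 = {A | Ext^i(A, B) = 0 for all B ∈ 𝒮, i ≥ 1}`. -/
def leftPerp (𝒮 : Set C) : Set C :=
  {A | ∀ B ∈ 𝒮, ∀ i : ℕ, 1 ≤ i → Subsingleton (Abelian.Ext A B i)}

/-! Dimension shifting along the coresolution puts `W'` in `⊥(𝒯^⊥)`; in particular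
`Ext¹(W', Z) = 0` for `Z ∈ 𝒯^⊥`, so the long exact `Ext(-, Z)` sequence of
`0 → W → M₀ → W' → 0` makes `Hom(M₀, Z) → Hom(W, Z)` surjective. -/

namespace CategoryTheory

lemma Abelian.Ext.subsingleton_of_iso {X X' : C} (e : X ≅ X') (Y : C) (n : ℕ)
    [Subsingleton (Abelian.Ext.{w} X' Y n)] : Subsingleton (Abelian.Ext.{w} X Y n) :=
  @Equiv.subsingleton _ _
    (((Abelian.extFunctor.{w} n).mapIso e.op).app Y).addCommGroupIsoToAddEquiv.toEquiv.symm ‹_›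

namespace ShortComplex.ShortExact

lemma subsingleton_ext_X₁ {S : ShortComplex C} (hS : S.ShortExact) (Y : C) (n : ℕ)
    [Subsingleton (Abelian.Ext.{w} S.X₂ Y n)] [Subsingleton (Abelian.Ext.{w} S.X₃ Y (1 + n))] :
    Subsingleton (Abelian.Ext.{w} S.X₁ Y n) := by
  suffices hzero : ∀ z : Abelian.Ext.{w} S.X₁ Y n, z = 0 from
    ⟨fun x y => by rw [hzero x, hzero y]⟩
  intro z
  obtain ⟨z₂, rfl⟩ :=
    Abelian.Ext.contravariant_sequence_exact₁ hS Y z rfl (Subsingleton.elim _ _)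
  rw [Subsingleton.elim z₂ 0, Abelian.Ext.comp_zero]

lemma exists_comp_eq_of_subsingleton_ext {S : ShortComplex C} (hS : S.ShortExact) {Z : C}
    [Subsingleton (Abelian.Ext.{w} S.X₃ Z 1)] (h : S.X₁ ⟶ Z) :
    ∃ k : S.X₂ ⟶ Z, S.f ≫ k = h := by
  obtain ⟨x, hx⟩ := Abelian.Ext.contravariant_sequence_exact₁ hS Z (Abelian.Ext.mk₀ h) rfl
    (Subsingleton.elim _ _)
  obtain ⟨k, rfl⟩ := (Abelian.Ext.mk₀_bijective S.X₂ Z).2 x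
  exact ⟨k, (Abelian.Ext.mk₀_bijective S.X₁ Z).1 (by rwa [Abelian.Ext.mk₀_comp_mk₀] at hx)⟩

end ShortComplex.ShortExact

end CategoryTheory

section leftPerp

variable {𝒮 : Set C}

lemma mem_leftPerp_of_iso {X X' : C} (e : X ≅ X') (h : X' ∈ leftPerp.{w} 𝒮) :
    X ∈ leftPerp.{w} 𝒮 := fun B hB i hi =>
  have := h B hB i hi
  Abelian.Ext.subsingleton_of_iso e B i

lemma CategoryTheory.ShortComplex.ShortExact.X₁_mem_leftPerp {S : ShortComplex C}
    (hS : S.ShortExact) (h₂ : S.X₂ ∈ leftPerp.{w} 𝒮) (h₃ : S.X₃ ∈ leftPerp.{w} 𝒮) :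
    S.X₁ ∈ leftPerp.{w} 𝒮 := fun B hB i hi =>
  have := h₂ B hB i hi
  have := h₃ B hB (1 + i) (by omega)
  hS.subsingleton_ext_X₁ B i

lemma CoresOfLength.mem_leftPerp {𝒯 : Set C} (h𝒯 : 𝒯 ⊆ leftPerp.{w} 𝒮) :
    ∀ {n : ℕ} {X : C}, CoresOfLength 𝒯 n X → X ∈ leftPerp.{w} 𝒮
  | 0, _, ⟨_, hT₀, ⟨e⟩⟩ => mem_leftPerp_of_iso e (h𝒯 hT₀)
  | _ + 1, _, ⟨_, _, _, _, _, hT₀, hS, hX'⟩ =>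
      hS.X₁_mem_leftPerp (h𝒯 hT₀) (CoresOfLength.mem_leftPerp h𝒯 hX')

end leftPerp

lemma subset_leftPerp_rightPerp (𝒯 : Set C) : 𝒯 ⊆ leftPerp.{w} (rightPerp.{w} 𝒯) :=
  fun T hT _ hB => hB T hT

/-- Let `𝒯 ⊆ 𝒯^⊥` and suppose there is an exact sequence
`0 → W → M₀ → M₁ → ⋯ → Mₙ → 0` with all `Mⱼ ∈ 𝒯` (encoded: a short exact sequence
`0 → W → M₀ → W' → 0` with `M₀ ∈ 𝒯` and `W'` having a finite `𝒯`-coresolution).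
Then `f₀ : W ⟶ M₀` is a special `𝒯^⊥`-preenvelope: it is a monomorphism, `M₀ ∈ 𝒯^⊥`,
its cokernel `W'` lies in `⊥(𝒯^⊥)`, and every morphism from `W` to an object of `𝒯^⊥`
factors through `f₀`. -/
theorem stmt10 (𝒯 : Set C) (hT : 𝒯 ⊆ rightPerp.{w} 𝒯)
    {W M₀ W' : C} (f₀ : W ⟶ M₀) (g : M₀ ⟶ W') (w : f₀ ≫ g = 0)
    (hse : (ShortComplex.mk f₀ g w).ShortExact) (hM₀ : M₀ ∈ 𝒯)
    {n : ℕ} (hW' : CoresOfLength 𝒯 n W') :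
    Mono f₀ ∧ M₀ ∈ rightPerp.{w} 𝒯 ∧ W' ∈ leftPerp.{w} (rightPerp.{w} 𝒯) ∧
      ∀ Z ∈ rightPerp.{w} 𝒯, ∀ h : W ⟶ Z, ∃ k : M₀ ⟶ Z, f₀ ≫ k = h := by
  have hW'perp : W' ∈ leftPerp.{w} (rightPerp.{w} 𝒯) :=
    hW'.mem_leftPerp (subset_leftPerp_rightPerp 𝒯)
  refine ⟨hse.mono_f, hT hM₀, hW'perp, fun Z hZ h => ?_⟩
  have := hW'perp Z hZ 1 le_rfl
  exact hse.exists_comp_eq_of_subsingleton_ext h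
end

section
/- Let C be an abelian category, X a class of objects of C closed under extensions and direct summands, and let (A,B) be a pair of classes of objects of C such that every X ∈ X admits a short exact sequence 0 → X → B_X → A_X → 0 with B_X ∈ B ∩ X and A_X ∈ A ∩ X (i.e., the pair is right X-complete). Assume B ∩ X is closed under direct summands. If α is a class of objects with α ⊆ X and Ext^1_C(X, W) = 0 for all X ∈ X and W ∈ α, then α ⊆ B ∩ X. -/
open CategoryTheory Limits

universe w v u

namespace CategoryTheory.ShortComplex.ShortExact

variable {C : Type u} [Category.{v} C] [Abelian C] [HasExt.{w} C]

lemma exists_retraction_of_subsingleton_ext {S : ShortComplex C} (hS : S.ShortExact)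
    [Subsingleton (Abelian.Ext S.X₃ S.X₁ 1)] : ∃ r : S.X₂ ⟶ S.X₁, S.f ≫ r = 𝟙 S.X₁ := by
  -- lift `𝟙 X₁` along the long exact `Ext(-, X₁)` sequence, then read the lift as a morphism
  obtain ⟨x, hx⟩ := Abelian.Ext.contravariant_sequence_exact₁ hS S.X₁
    (Abelian.Ext.mk₀ (𝟙 S.X₁)) (n₁ := 1) rfl (Subsingleton.elim _ _)
  refine ⟨Abelian.Ext.homEquiv₀ x, Abelian.Ext.mk₀_bijective _ _ |>.injective ?_⟩
  rwa [← Abelian.Ext.mk₀_comp_mk₀, Abelian.Ext.mk₀_homEquiv₀_apply]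

end CategoryTheory.ShortComplex.ShortExact

theorem stmt11_general {C : Type u} [Category.{v} C] [Abelian C] [HasExt.{w} C]
    (𝒳 𝒜 ℬ α : Set C)
    (hBXsmd : ∀ ⦃X Y : C⦄ (s : X ⟶ Y) (r : Y ⟶ X), s ≫ r = 𝟙 X →
      Y ∈ ℬ ∩ 𝒳 → X ∈ ℬ ∩ 𝒳)
    (hcomp : ∀ X ∈ 𝒳, ∃ (B A : C) (f : X ⟶ B) (g : B ⟶ A) (w : f ≫ g = 0),
      (ShortComplex.mk f g w).ShortExact ∧ B ∈ ℬ ∩ 𝒳 ∧ A ∈ 𝒜 ∩ 𝒳)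
    (hα𝒳 : α ⊆ 𝒳)
    (hαExt : ∀ X ∈ 𝒳, ∀ W ∈ α, Subsingleton (Abelian.Ext X W 1)) :
    α ⊆ ℬ ∩ 𝒳 := by
  intro W hW
  obtain ⟨B, A, f, g, w, hS, hB, hA⟩ := hcomp W (hα𝒳 hW)
  have := hαExt A hA.2 W hW
  obtain ⟨r, hr⟩ := hS.exists_retraction_of_subsingleton_ext
  exact hBXsmd f r hr hB

/-- Let `C` be abelian, `𝒳` closed under extensions and direct summands,
and `(𝒜, ℬ)` a right `𝒳`-complete pair: every `X ∈ 𝒳` fits in a short exact sequence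
`0 → X → B_X → A_X → 0` with `B_X ∈ ℬ ∩ 𝒳`, `A_X ∈ 𝒜 ∩ 𝒳`. Assume `ℬ ∩ 𝒳` is closed
under direct summands. If `α ⊆ 𝒳` and `Ext¹(X, W) = 0` for all `X ∈ 𝒳`, `W ∈ α`, then
`α ⊆ ℬ ∩ 𝒳`. -/
theorem stmt11 {C : Type u} [Category.{v} C] [Abelian C] [HasExt.{w} C]
    (𝒳 𝒜 ℬ α : Set C)
    (hXext : ∀ (S : ShortComplex C), S.ShortExact → S.X₁ ∈ 𝒳 → S.X₃ ∈ 𝒳 → S.X₂ ∈ 𝒳)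
    (hXsmd : ∀ ⦃X Y : C⦄ (s : X ⟶ Y) (r : Y ⟶ X), s ≫ r = 𝟙 X → Y ∈ 𝒳 → X ∈ 𝒳)
    (hBXsmd : ∀ ⦃X Y : C⦄ (s : X ⟶ Y) (r : Y ⟶ X), s ≫ r = 𝟙 X →
      Y ∈ ℬ ∩ 𝒳 → X ∈ ℬ ∩ 𝒳)
    (hcomp : ∀ X ∈ 𝒳, ∃ (B A : C) (f : X ⟶ B) (g : B ⟶ A) (w : f ≫ g = 0),
      (ShortComplex.mk f g w).ShortExact ∧ B ∈ ℬ ∩ 𝒳 ∧ A ∈ 𝒜 ∩ 𝒳)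
    (hα𝒳 : α ⊆ 𝒳)
    (hαExt : ∀ X ∈ 𝒳, ∀ W ∈ α, Subsingleton (Abelian.Ext X W 1)) :
    α ⊆ ℬ ∩ 𝒳 :=
  stmt11_general 𝒳 𝒜 ℬ α hBXsmd hcomp hα𝒳 hαExt
end
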